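/- For every x ∈ ℝ^n one has x ≤ r(x), and for every dominant μ ∈ ℝ^n with x ≤ μ one has r(x) ≤ μ. Consequently r(x) is the unique minimal element, with respect to ≤, of the set {μ ∈ C : x ≤ μ}. -/

import Mathlib

/-!
The closest point `p = r x` is characterised by `⟪x - p, c - p⟫ ≤ 0` for every dominant `c`.
Testing against `c = p + 𝟙_{[1,k]}` and `c = p - 𝟙_{[1,n]}` gives `S_k(x) ≤ S_k(p)` with
equality for `k = n`; at an index `k` where `p` drops strictly, testing against
`c = p - (p_k - p_{k+1}) 𝟙_{[1,k]}` gives `S_k(p) = S_k(x)`.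
For a dominant `μ ≥ x` the sequence `d_k = S_k(p) - S_k(μ)` vanishes at `0` and `n`. Once it
rises to a positive value, `p` cannot drop there (else `d_k = S_k(x) - S_k(μ) ≤ 0`), so `p` is
flat while `μ` decreases, and `d` keeps rising up to `d_n`, which is absurd.
Uniqueness of the minimal element is antisymmetry of `≤`.
-/

/-- The dominant cone `C = {x ∈ ℝⁿ : x₁ ≥ x₂ ≥ ⋯ ≥ xₙ}`. -/
def domCone (n : ℕ) : Set (EuclideanSpace ℝ (Fin n)) :=
  {x | ∀ i j : Fin n, i ≤ j → x j ≤ x i}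

/-- `r` is the map sending each point of `ℝⁿ` to the (unique) closest point
of the dominant cone. -/
def IsClosestPointMap (n : ℕ)
    (r : EuclideanSpace ℝ (Fin n) → EuclideanSpace ℝ (Fin n)) : Prop :=
  ∀ x, r x ∈ domCone n ∧ ∀ c ∈ domCone n, dist x (r x) ≤ dist x c

/-- `S_k(x) = x₁ + ⋯ + x_k`, the sum of the first `k` coordinates. -/
def psum {n : ℕ} (x : Fin n → ℝ) (k : ℕ) : ℝ :=
  ∑ j ∈ Finset.univ.filter (fun j : Fin n => (j : ℕ) < k), x j

/-- The dominance order: `x ≤ y` iff `S_k(x) ≤ S_k(y)` for `k = 1, …, n-1`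
and `S_n(x) = S_n(y)`. -/
def dle {n : ℕ} (x y : Fin n → ℝ) : Prop :=
  (∀ k, 1 ≤ k → k < n → psum x k ≤ psum y k) ∧ psum x n = psum y n

open RealInnerProductSpace

lemma psum_zero {n : ℕ} (y : Fin n → ℝ) : psum y 0 = 0 := by
  simp [psum]

lemma psum_succ {n : ℕ} (y : Fin n → ℝ) {k : ℕ} (hk : k < n) :
    psum y (k + 1) = psum y k + y ⟨k, hk⟩ := by
  have hfilter : Finset.univ.filter (fun j : Fin n => (j : ℕ) < k + 1) =
      insert ⟨k, hk⟩ (Finset.univ.filter (fun j : Fin n => (j : ℕ) < k)) := by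
    ext j
    simp only [Finset.mem_filter, Finset.mem_univ, true_and, Finset.mem_insert, Fin.ext_iff]
    omega
  rw [psum, hfilter, Finset.sum_insert (by simp), add_comm]
  rfl

lemma eq_of_psum_eq {n : ℕ} {x y : Fin n → ℝ} (h : ∀ k ≤ n, psum x k = psum y k) : x = y := by
  funext ⟨j, hj⟩
  have hsucc := h (j + 1) hj
  rw [psum_succ x hj, psum_succ y hj, h j hj.le] at hsucc
  exact add_left_cancel hsucc

lemma dle_antisymm {n : ℕ} {x y : Fin n → ℝ} (hxy : dle x y) (hyx : dle y x) : x = y := by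
  refine eq_of_psum_eq fun k hk => ?_
  rcases Nat.eq_zero_or_pos k with rfl | hk0
  · rw [psum_zero, psum_zero]
  rcases hk.lt_or_eq with hkn | rfl
  · exact le_antisymm (hxy.1 k hk0 hkn) (hyx.1 k hk0 hkn)
  · exact hxy.2

lemma nonpos_of_rise_propagates {d : ℕ → ℝ} {n : ℕ} (h0 : d 0 ≤ 0) (hn : d n ≤ 0)
    (hstep : ∀ k, k + 1 < n → 0 < d (k + 1) → d k < d (k + 1) → d (k + 1) < d (k + 1 + 1)) :
    ∀ k ≤ n, d k ≤ 0 := by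
  intro k
  induction k with
  | zero => exact fun _ => h0
  | succ k ih =>
    intro hk
    by_contra! hpos
    have hrise : ∀ j ≥ k, j + 1 ≤ n → 0 < d (j + 1) ∧ d j < d (j + 1) := by
      refine Nat.le_induction (fun _ => ⟨hpos, by linarith [ih (by omega)]⟩) ?_
      intro j _ hj hjn
      obtain ⟨hpos', hlt⟩ := hj (by omega)
      have := hstep j (by omega) hpos' hlt
      exact ⟨by linarith, this⟩
    obtain ⟨m, rfl⟩ : ∃ m, n = m + 1 := ⟨n - 1, by omega⟩
    linarith [(hrise m (by omega) le_rfl).1]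

noncomputable def prefixIndicator (n k : ℕ) : EuclideanSpace ℝ (Fin n) :=
  WithLp.toLp 2 fun j : Fin n => if (j : ℕ) < k then 1 else 0

lemma inner_prefixIndicator {n : ℕ} (v : EuclideanSpace ℝ (Fin n)) (k : ℕ) :
    ⟪v, prefixIndicator n k⟫ = psum v k := by
  simp [PiLp.inner_apply, psum, Finset.sum_filter, prefixIndicator]

lemma convex_domCone (n : ℕ) : Convex ℝ (domCone n) := by
  intro a ha b hb s t hs ht _ i j hij
  simp only [PiLp.add_apply, PiLp.smul_apply, smul_eq_mul]
  gcongr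
  exacts [ha i j hij, hb i j hij]

lemma add_smul_prefixIndicator_mem_domCone {n k : ℕ} {p : EuclideanSpace ℝ (Fin n)}
    (hp : p ∈ domCone n) {s : ℝ} (hs : ∀ i j : Fin n, (i : ℕ) < k → k ≤ (j : ℕ) → p j ≤ p i + s) :
    p + s • prefixIndicator n k ∈ domCone n := by
  intro i j hij
  have hij' : (i : ℕ) ≤ j := hij
  simp only [PiLp.add_apply, PiLp.smul_apply, prefixIndicator, smul_eq_mul]
  by_cases hi : (i : ℕ) < k <;> by_cases hj : (j : ℕ) < k
  · simpa [hi, hj] using hp i j hij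
  · simpa [hi, hj] using hs i j hi (not_lt.1 hj)
  · omega
  · simpa [hi, hj] using hp i j hij

section ClosestPoint

variable {n : ℕ} {x p : EuclideanSpace ℝ (Fin n)} (hp : p ∈ domCone n)
  (hmin : ∀ c ∈ domCone n, dist x p ≤ dist x c)
include hp hmin

lemma inner_sub_nonpos_of_isClosest : ∀ c ∈ domCone n, ⟪x - p, c - p⟫ ≤ 0 := by
  have : Nonempty (domCone n) := ⟨⟨p, hp⟩⟩
  refine (norm_eq_iInf_iff_real_inner_le_zero (convex_domCone n) hp).1 (le_antisymm ?_ ?_)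
  · exact le_ciInf fun c => by simpa only [dist_eq_norm] using hmin c c.2
  · have hbdd : BddBelow (Set.range fun c : domCone n => ‖x - c‖) :=
      ⟨0, by rintro _ ⟨c, rfl⟩; exact norm_nonneg _⟩
    exact ciInf_le hbdd ⟨p, hp⟩

lemma mul_psum_sub_nonpos_of_isClosest {k : ℕ} {s : ℝ}
    (hs : p + s • prefixIndicator n k ∈ domCone n) : s * (psum x k - psum p k) ≤ 0 := by
  have := inner_sub_nonpos_of_isClosest hp hmin _ hs
  rwa [add_sub_cancel_left, inner_smul_right, inner_sub_left, inner_prefixIndicator,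
    inner_prefixIndicator] at this

lemma psum_le_psum_of_isClosest (k : ℕ) : psum x k ≤ psum p k := by
  have := mul_psum_sub_nonpos_of_isClosest hp hmin (s := 1) (k := k)
    (add_smul_prefixIndicator_mem_domCone hp fun i j hij hjk => by
      linarith [hp i j (Fin.le_def.2 (by omega))])
  linarith

lemma psum_total_eq_of_isClosest : psum x n = psum p n := by
  have := mul_psum_sub_nonpos_of_isClosest hp hmin (s := -1) (k := n)
    (add_smul_prefixIndicator_mem_domCone hp fun _ j _ hj => absurd j.2 (not_lt.2 hj))
  linarith [psum_le_psum_of_isClosest hp hmin n]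

-- Lowering the first `m + 1` coordinates of `p` by the size of the drop keeps it dominant.
lemma psum_eq_of_isClosest_of_drop {m : ℕ} (hm : m + 1 < n)
    (hdrop : p ⟨m + 1, hm⟩ < p ⟨m, by omega⟩) : psum p (m + 1) = psum x (m + 1) := by
  have := mul_psum_sub_nonpos_of_isClosest hp hmin (s := p ⟨m + 1, hm⟩ - p ⟨m, by omega⟩)
    (k := m + 1) (add_smul_prefixIndicator_mem_domCone hp fun i j hi hj => by
      linarith [hp i ⟨m, by omega⟩ (by rw [Fin.le_def]; dsimp only; omega),
        hp ⟨m + 1, hm⟩ j (by rw [Fin.le_def]; dsimp only; omega)])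
  nlinarith [psum_le_psum_of_isClosest hp hmin (m + 1)]

lemma dle_of_isClosest : dle x p :=
  ⟨fun k _ _ => psum_le_psum_of_isClosest hp hmin k, psum_total_eq_of_isClosest hp hmin⟩

lemma dle_of_isClosest_of_dle {μ : EuclideanSpace ℝ (Fin n)} (hμ : μ ∈ domCone n)
    (hxμ : dle x μ) : dle p μ := by
  set d : ℕ → ℝ := fun k => psum p k - psum μ k with hd
  have hstep : ∀ k, k + 1 < n → 0 < d (k + 1) → d k < d (k + 1) →
      d (k + 1) < d (k + 1 + 1) := by
    intro k hk hpos hrise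
    have hflat : p ⟨k + 1, hk⟩ = p ⟨k, by omega⟩ := by
      refine (hp _ _ (by rw [Fin.le_def]; dsimp only; omega)).eq_of_not_lt fun hdrop => ?_
      have := psum_eq_of_isClosest_of_drop hp hmin hk hdrop
      linarith [hxμ.1 (k + 1) (by omega) hk]
    have hμk := hμ ⟨k, by omega⟩ ⟨k + 1, hk⟩ (by rw [Fin.le_def]; dsimp only; omega)
    simp only [hd, psum_succ p hk, psum_succ μ hk, psum_succ p (by omega : k < n),
      psum_succ μ (by omega : k < n)] at hrise ⊢
    linarith
  have hle := nonpos_of_rise_propagates (d := d) (n := n) (by simp [hd, psum_zero])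
    (by simp [hd, ← psum_total_eq_of_isClosest hp hmin, hxμ.2]) hstep
  exact ⟨fun k _ hk => by linarith [hle k hk.le],
    by linarith [hle n le_rfl, psum_total_eq_of_isClosest hp hmin, hxμ.2]⟩

end ClosestPoint

theorem stmt_3_general (n : ℕ)
    (r : EuclideanSpace ℝ (Fin n) → EuclideanSpace ℝ (Fin n))
    (hr : IsClosestPointMap n r)
    (x : EuclideanSpace ℝ (Fin n)) :
    dle x (r x) ∧
    (∀ μ ∈ domCone n, dle x μ → dle (r x) μ) ∧
    (∀ z ∈ domCone n, dle x z → (∀ μ ∈ domCone n, dle x μ → dle z μ) → z = r x) := by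
  obtain ⟨hrC, hmin⟩ := hr x
  have hle : ∀ μ ∈ domCone n, dle x μ → dle (r x) μ := fun μ hμ hxμ =>
    dle_of_isClosest_of_dle hrC hmin hμ hxμ
  refine ⟨dle_of_isClosest hrC hmin, hle, fun z hz hxz hzmin => ?_⟩
  exact WithLp.ofLp_injective 2 (dle_antisymm (hzmin _ hrC (dle_of_isClosest hrC hmin))
    (hle z hz hxz))

/-- Proposition 1.1(3) for `GL_n`: `x ≤ r x`, `r x ≤ μ` for every dominant `μ ≥ x`,
and `r x` is the unique such minimal element of `{μ ∈ C : x ≤ μ}`. -/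
theorem stmt_3 (n : ℕ) (hn : 1 ≤ n)
    (r : EuclideanSpace ℝ (Fin n) → EuclideanSpace ℝ (Fin n))
    (hr : IsClosestPointMap n r)
    (x : EuclideanSpace ℝ (Fin n)) :
    dle x (r x) ∧
    (∀ μ ∈ domCone n, dle x μ → dle (r x) μ) ∧
    (∀ z ∈ domCone n, dle x z → (∀ μ ∈ domCone n, dle x μ → dle z μ) → z = r x) :=
  stmt_3_general n r hr x
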